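/- Let a ∈ ℝ³ with z := √(a₁² + a₂²) ≠ 0 and z² − a₃² > 0, and set μ := √(z² − a₃²). Let φ, χ ∈ ℝ satisfy sin φ = a₁/z, cos φ = a₂/z, sinh χ = a₃/μ, cosh χ = z/μ. Then P₁(−χ)·R₃(−φ)·a = (0, μ, 0). -/

import Mathlib

/-!
The rotation by `-φ` about the third axis takes `(z sin φ, z cos φ, w)` to `(0, z, w)`, and the
boost by `-χ` about the first axis takes `(0, μ cosh χ, μ sinh χ)` to `(0, μ, 0)`. The conditions
on `φ` and `χ` say precisely that `a` has the first shape and `(0, z, a₃)` the second; their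
denominators cannot vanish, because `sin² + cos² = 1` and `cosh > 0`.
-/

open Matrix

/-- Rotation about the third axis:
rows `(cos q, sin q, 0)`, `(−sin q, cos q, 0)`, `(0,0,1)`. -/
noncomputable def R3 (q : ℝ) : Matrix (Fin 3) (Fin 3) ℝ :=
  !![Real.cos q, Real.sin q, 0;
     -Real.sin q, Real.cos q, 0;
     0, 0, 1]

/-- Hyperbolic rotation about the first axis:
rows `(1,0,0)`, `(0, cosh χ, sinh χ)`, `(0, sinh χ, cosh χ)`. -/
noncomputable def P1 (χ : ℝ) : Matrix (Fin 3) (Fin 3) ℝ :=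
  !![1, 0, 0;
     0, Real.cosh χ, Real.sinh χ;
     0, Real.sinh χ, Real.cosh χ]

open Real

lemma R3_mulVec (q : ℝ) (v : Fin 3 → ℝ) :
    R3 q *ᵥ v = ![cos q * v 0 + sin q * v 1, -sin q * v 0 + cos q * v 1, v 2] := by
  ext i
  fin_cases i <;> simp [R3, mulVec, dotProduct, Fin.sum_univ_succ]

lemma P1_mulVec (χ : ℝ) (v : Fin 3 → ℝ) :
    P1 χ *ᵥ v = ![v 0, cosh χ * v 1 + sinh χ * v 2, sinh χ * v 1 + cosh χ * v 2] := by
  ext i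
  fin_cases i <;> simp [P1, mulVec, dotProduct, Fin.sum_univ_succ]

lemma R3_neg_mulVec_polar (φ r w : ℝ) :
    R3 (-φ) *ᵥ ![r * sin φ, r * cos φ, w] = ![0, r, w] := by
  rw [R3_mulVec, cos_neg, sin_neg]
  have := sin_sq_add_cos_sq φ
  ext i
  fin_cases i <;> simp only [Fin.zero_eta, Fin.mk_one, Fin.reduceFinMk, cons_val] <;> grind

lemma P1_neg_mulVec_hyperbolic (χ r : ℝ) :
    P1 (-χ) *ᵥ ![0, r * cosh χ, r * sinh χ] = ![0, r, 0] := by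
  rw [P1_mulVec, cosh_neg, sinh_neg]
  have := cosh_sq_sub_sinh_sq χ
  ext i
  fin_cases i <;> simp only [Fin.zero_eta, Fin.mk_one, Fin.reduceFinMk, cons_val] <;> grind

lemma eq_mul_sin_and_eq_mul_cos_of_div {φ x y z : ℝ} (hsin : sin φ = x / z)
    (hcos : cos φ = y / z) : x = z * sin φ ∧ y = z * cos φ := by
  have hz : z ≠ 0 := by
    rintro rfl
    simpa [hsin, hcos] using sin_sq_add_cos_sq φ
  constructor <;> [rw [hsin]; rw [hcos]] <;> field_simp

lemma eq_mul_sinh_and_eq_mul_cosh_of_div {χ x y r : ℝ} (hsinh : sinh χ = x / r)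
    (hcosh : cosh χ = y / r) : x = r * sinh χ ∧ y = r * cosh χ := by
  have hr : r ≠ 0 := by
    rintro rfl
    simpa [hcosh] using (cosh_pos χ).ne'
  constructor <;> [rw [hsinh]; rw [hcosh]] <;> field_simp

theorem stmt_11 (a : Fin 3 → ℝ) (φ χ : ℝ)
    (hsinφ : Real.sin φ = a 0 / Real.sqrt (a 0 ^ 2 + a 1 ^ 2))
    (hcosφ : Real.cos φ = a 1 / Real.sqrt (a 0 ^ 2 + a 1 ^ 2))
    (hsinhχ : Real.sinh χ =
        a 2 / Real.sqrt (Real.sqrt (a 0 ^ 2 + a 1 ^ 2) ^ 2 - a 2 ^ 2))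
    (hcoshχ : Real.cosh χ = Real.sqrt (a 0 ^ 2 + a 1 ^ 2) /
        Real.sqrt (Real.sqrt (a 0 ^ 2 + a 1 ^ 2) ^ 2 - a 2 ^ 2)) :
    (P1 (-χ) * R3 (-φ)).mulVec a =
      ![0, Real.sqrt (Real.sqrt (a 0 ^ 2 + a 1 ^ 2) ^ 2 - a 2 ^ 2), 0] := by
  set z := √(a 0 ^ 2 + a 1 ^ 2)
  set μ := √(z ^ 2 - a 2 ^ 2)
  obtain ⟨ha₀, ha₁⟩ := eq_mul_sin_and_eq_mul_cos_of_div hsinφ hcosφ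
  obtain ⟨ha₂, hz⟩ := eq_mul_sinh_and_eq_mul_cosh_of_div hsinhχ hcoshχ
  have ha : a = ![z * sin φ, z * cos φ, μ * sinh χ] := by
    ext i; fin_cases i <;> simp [ha₀, ha₁, ha₂]
  rw [← mulVec_mulVec, ha, R3_neg_mulVec_polar, hz, P1_neg_mulVec_hyperbolic]
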